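/- Let G be a finite cyclic group of order M and let Ĝ denote its group of complex characters. For g ∈ G, the quantity (φ(M)/M) · ∏_{p prime, p ∣ M} (1 - (1/φ(p)) · Σ_{χ ∈ Ĝ, ord(χ)=p} χ(g)) equals 1 if g generates G and equals 0 otherwise. -/

import Mathlib

open scoped Classical

open Finset

namespace Stmt0Aux

variable {G : Type*} [CommGroup G] [Fintype G] [IsCyclic G] [Fintype (G →* ℂˣ)]

/-- evaluation at `g` as a monoid hom on the character group. -/
def evalHom (g : G) : (G →* ℂˣ) →* ℂˣ where
  toFun χ := χ g
  map_one' := rfl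
  map_mul' _ _ := rfl

lemma evalHom_inj (g0 : G) (hg0 : ∀ x, x ∈ Subgroup.zpowers g0) :
    Function.Injective ((Units.coeHom ℂ).comp (evalHom g0)) := by
  intro χ₁ χ₂ h
  have h' : χ₁ g0 = χ₂ g0 := Units.ext h
  ext x
  obtain ⟨n, rfl⟩ := (Submonoid.mem_powers_iff _ _).mp
    (mem_powers_iff_mem_zpowers.mpr (hg0 x))
  simp only [map_pow]
  rw [h']

lemma char_sum (M : ℕ) (hM : Fintype.card G = M) {p : ℕ} (hpp : p.Prime)
    (hpM : p ∣ M) (g0 : G) (hg0 : ∀ x, x ∈ Subgroup.zpowers g0) (k : ℕ) :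
    ∑ χ ∈ Finset.univ.filter (fun χ : G →* ℂˣ => orderOf χ = p),
      ((χ (g0 ^ k) : ℂˣ) : ℂ) = if p ∣ k then ((p : ℂ) - 1) else -1 := by
  haveI := Fact.mk hpp
  have hM0 : M ≠ 0 := by rw [← hM]; exact Fintype.card_ne_zero
  have hMpos : 0 < M := Nat.pos_of_ne_zero hM0
  have hordg0 : orderOf g0 = M := by
    rw [orderOf_eq_card_of_forall_mem_zpowers hg0, Nat.card_eq_fintype_card, hM]
  -- a primitive M-th root of unity in ℂˣ
  have hζ : IsPrimitiveRoot (Complex.exp (2 * Real.pi * Complex.I / M)) M :=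
    Complex.isPrimitiveRoot_exp M hM0
  set ζu : ℂˣ := (hζ.isUnit hM0).unit with hζudef
  have hζu : IsPrimitiveRoot ζu M := hζ.isUnit_unit hM0
  have hordζ : orderOf ζu = M := hζu.eq_orderOf.symm
  have hdvd : orderOf ζu ∣ orderOf g0 := by rw [hordζ, hordg0]
  set χ1 : G →* ℂˣ := monoidHomOfForallMemZpowers hg0 hdvd with hχ1def
  have hχ1g0 : χ1 g0 = ζu := monoidHomOfForallMemZpowers_apply_gen hg0 hdvd
  have hxM : ∀ x : G, x ^ M = 1 := fun x => hM ▸ pow_card_eq_one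
  have hχ1M : χ1 ^ M = 1 := by
    ext x
    rw [MonoidHom.pow_apply, ← map_pow, hxM, map_one, MonoidHom.one_apply]
  -- basic arithmetic about M/p
  have hMpp : M / p * p = M := Nat.div_mul_cancel hpM
  have hMp_pos : 0 < M / p := Nat.div_pos (Nat.le_of_dvd hMpos hpM) hpp.pos
  have hMp_lt : M / p < M := Nat.div_lt_self hMpos hpp.one_lt
  -- the torsion subgroup H
  haveI hcyc : IsCyclic (G →* ℂˣ) :=
    isCyclic_of_subgroup_isDomain _ (evalHom_inj g0 hg0)
  set H : Subgroup (G →* ℂˣ) := (powMonoidHom p : (G →* ℂˣ) →* (G →* ℂˣ)).ker with hHdef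
  have hmemH : ∀ χ : G →* ℂˣ, χ ∈ H ↔ χ ^ p = 1 := fun χ => by
    simp [hHdef, MonoidHom.mem_ker, powMonoidHom_apply]
  -- the distinguished character ψ of order p
  set ψ : G →* ℂˣ := χ1 ^ (M / p) with hψdef
  have hψeval : ∀ j : ℕ, ψ (g0 ^ j) = ζu ^ (j * (M / p)) := by
    intro j
    rw [hψdef, MonoidHom.pow_apply, map_pow, hχ1g0, ← pow_mul, mul_comm]
  have hiff : ∀ j : ℕ, ψ (g0 ^ j) = 1 ↔ p ∣ j := by
    intro j
    rw [hψeval, hζu.pow_eq_one_iff_dvd]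
    constructor
    · intro h
      have h' : M / p * p ∣ M / p * j := by rwa [hMpp, mul_comm (M/p) j]
      exact (Nat.mul_dvd_mul_iff_left hMp_pos).mp h'
    · rintro ⟨m, rfl⟩
      rw [show p * m * (M / p) = m * (M / p * p) by ring, hMpp]
      exact dvd_mul_left M m
  have hψH : ψ ∈ H := by
    rw [hmemH, hψdef]
    have := pow_mul χ1 (M / p) p
    rw [hMpp] at this
    exact this.symm.trans hχ1M
  have hψg0 : ψ g0 ≠ 1 := by
    intro h
    have := (hiff 1).mp (by rwa [pow_one])
    exact hpp.ne_one (Nat.dvd_one.mp this)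
  have hψne : ψ ≠ 1 := fun h => hψg0 (by rw [h, MonoidHom.one_apply])
  have hψp : ψ ^ p = 1 := (hmemH ψ).mp hψH
  have hordψ : orderOf ψ = p := orderOf_eq_prime hψp hψne
  -- card H = p
  obtain ⟨χc, hχc⟩ := IsCyclic.exists_generator (α := H)
  have hcard1 : orderOf χc = Fintype.card H := by
    rw [orderOf_eq_card_of_forall_mem_zpowers hχc, Nat.card_eq_fintype_card]
  have hχcp : χc ^ p = 1 := by
    apply Subtype.ext
    rw [Subgroup.coe_pow]
    exact (hmemH _).mp χc.2
  have hcard_dvd : Fintype.card H ∣ p := hcard1 ▸ orderOf_dvd_of_pow_eq_one hχcp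
  have hp_dvd : p ∣ Fintype.card H := by
    have h1 : orderOf (⟨ψ, hψH⟩ : H) = p := by
      rw [← orderOf_injective H.subtype H.subtype_injective ⟨ψ, hψH⟩]
      exact hordψ
    exact h1 ▸ orderOf_dvd_card
  have hcardH : Fintype.card H = p := Nat.dvd_antisymm hcard_dvd hp_dvd
  -- the sum over H
  set f : H →* ℂ := (Units.coeHom ℂ).comp ((evalHom (g0 ^ k)).comp H.subtype) with hfdef
  have hfapp : ∀ χ : H, f χ = ((χ : G →* ℂˣ) (g0 ^ k) : ℂ) := fun χ => rfl
  have hf1 : (f = 1) ↔ p ∣ k := by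
    constructor
    · intro h
      by_contra hpk
      have := congrArg (fun F : H →* ℂ => F ⟨ψ, hψH⟩) h
      simp only [hfapp, MonoidHom.one_apply] at this
      exact (hiff k).not.mpr hpk (Units.ext this)
    · rintro ⟨m, rfl⟩
      ext χ
      have hχp : (χ : G →* ℂˣ) ^ p = 1 := (hmemH _).mp χ.2
      have : (χ : G →* ℂˣ) (g0 ^ (p * m)) = 1 := by
        rw [mul_comm, pow_mul, map_pow, ← MonoidHom.pow_apply, hχp, MonoidHom.one_apply]
      rw [hfapp, this, MonoidHom.one_apply, Units.val_one]
  have hT : ∑ χ ∈ Finset.univ.filter (fun χ : G →* ℂˣ => χ ^ p = 1),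
      ((χ (g0 ^ k) : ℂˣ) : ℂ) = if p ∣ k then (p : ℂ) else 0 := by
    rw [Finset.sum_subtype (Finset.univ.filter (fun χ : G →* ℂˣ => χ ^ p = 1))
      (p := fun χ => χ ∈ H) (fun χ => by simp [hmemH]) (f := fun χ => ((χ (g0 ^ k) : ℂˣ) : ℂ))]
    have := sum_hom_units f
    simp only [hfapp] at this
    rw [this]
    by_cases hpk : p ∣ k
    · rw [if_pos (hf1.mpr hpk), if_pos hpk, hcardH]
    · rw [if_neg (fun h => hpk (hf1.mp h)), if_neg hpk, Nat.cast_zero]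
  -- split off the trivial character
  have hsplit : Finset.univ.filter (fun χ : G →* ℂˣ => χ ^ p = 1)
      = insert 1 (Finset.univ.filter (fun χ : G →* ℂˣ => orderOf χ = p)) := by
    ext χ
    simp only [mem_filter, mem_univ, true_and, mem_insert]
    constructor
    · intro h
      rcases (Nat.dvd_prime hpp).mp (orderOf_dvd_of_pow_eq_one (x := χ) (n := p) h) with h1 | h1
      · exact Or.inl (orderOf_eq_one_iff.mp h1)
      · exact Or.inr h1
    · rintro (rfl | h)
      · exact one_pow (M := G →* ℂˣ) p
      · rw [← h]; exact pow_orderOf_eq_one χ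
  have h1notin : (1 : G →* ℂˣ) ∉
      Finset.univ.filter (fun χ : G →* ℂˣ => orderOf χ = p) := by
    simp [orderOf_one, hpp.ne_one, Ne.symm hpp.ne_one]
  rw [hsplit, Finset.sum_insert h1notin] at hT
  simp only [MonoidHom.one_apply, Units.val_one] at hT
  by_cases hpk : p ∣ k
  · rw [if_pos hpk] at hT
    rw [if_pos hpk]
    linear_combination hT
  · rw [if_neg hpk] at hT
    rw [if_neg hpk]
    linear_combination hT

theorem stmt_0' {G : Type*} [CommGroup G] [Fintype G] [IsCyclic G]
    [Fintype (G →* ℂˣ)] (M : ℕ) (hM : Fintype.card G = M) (g : G) :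
    ((Nat.totient M : ℂ) / M) *
      ∏ p ∈ M.primeFactors,
        (1 - (1 / (Nat.totient p : ℂ)) *
          ∑ χ ∈ Finset.univ.filter (fun χ : G →* ℂˣ => orderOf χ = p), ((χ g : ℂˣ) : ℂ)) =
      (if Subgroup.zpowers g = ⊤ then 1 else 0) := by
  obtain ⟨g0, hg0⟩ := IsCyclic.exists_generator (α := G)
  obtain ⟨k, rfl⟩ := (Submonoid.mem_powers_iff _ _).mp
    (mem_powers_iff_mem_zpowers.mpr (hg0 g))
  have hM0 : M ≠ 0 := by rw [← hM]; exact Fintype.card_ne_zero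
  have hMpos : 0 < M := Nat.pos_of_ne_zero hM0
  have hordg0 : orderOf g0 = M := by
    rw [orderOf_eq_card_of_forall_mem_zpowers hg0, Nat.card_eq_fintype_card, hM]
  -- value of each factor
  have hfac : ∀ p ∈ M.primeFactors,
      (1 - (1 / (Nat.totient p : ℂ)) *
        ∑ χ ∈ Finset.univ.filter (fun χ : G →* ℂˣ => orderOf χ = p), ((χ (g0 ^ k) : ℂˣ) : ℂ))
      = if p ∣ k then 0 else (p : ℂ) / ((p : ℂ) - 1) := by
    intro p hp
    have hpp := Nat.prime_of_mem_primeFactors hp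
    have hpM := Nat.dvd_of_mem_primeFactors hp
    have hp1 : ((p : ℂ) - 1) ≠ 0 := by
      intro h
      exact hpp.ne_one (Nat.cast_eq_one.mp (by linear_combination h))
    rw [char_sum M hM hpp hpM g0 hg0 k, Nat.totient_prime hpp,
      Nat.cast_sub hpp.one_lt.le, Nat.cast_one]
    by_cases hpk : p ∣ k
    · rw [if_pos hpk, if_pos hpk]
      field_simp
      ring
    · rw [if_neg hpk, if_neg hpk]
      field_simp
      ring
  -- criterion for generating
  have hgen : Subgroup.zpowers (g0 ^ k) = ⊤ ↔ ∀ p ∈ M.primeFactors, ¬ p ∣ k := by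
    constructor
    · intro htop p hp hpk
      have hpp := Nat.prime_of_mem_primeFactors hp
      have hpM := Nat.dvd_of_mem_primeFactors hp
      have hordg : orderOf (g0 ^ k) = M := by
        rw [orderOf_eq_card_of_forall_mem_zpowers (fun x => htop ▸ Subgroup.mem_top x),
          Nat.card_eq_fintype_card, hM]
      obtain ⟨m, rfl⟩ := hpk
      have h1 : (g0 ^ (p * m)) ^ (M / p) = 1 := by
        rw [← pow_mul]
        apply orderOf_dvd_iff_pow_eq_one.mp
        rw [hordg0, show p * m * (M / p) = m * (p * (M / p)) by ring,
          Nat.mul_div_cancel' hpM]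
        exact dvd_mul_left M m
      have h2 : M ∣ M / p := by
        have := orderOf_dvd_iff_pow_eq_one.mpr h1
        rwa [hordg] at this
      have hlt : M / p < M := Nat.div_lt_self hMpos hpp.one_lt
      have hpos : 0 < M / p := Nat.div_pos (Nat.le_of_dvd hMpos hpM) hpp.pos
      exact absurd (Nat.le_of_dvd hpos h2) (not_le.mpr hlt)
    · intro hc
      have hdM : orderOf (g0 ^ k) ∣ M := hM ▸ orderOf_dvd_card
      have hdpos : 0 < orderOf (g0 ^ k) := orderOf_pos _
      have hdeq : orderOf (g0 ^ k) = M := by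
        by_contra hne
        set d := orderOf (g0 ^ k) with hd
        have hdlt : d < M := lt_of_le_of_ne (Nat.le_of_dvd hMpos hdM) hne
        have hq1 : M / d ≠ 1 := by
          intro h
          have := Nat.div_mul_cancel hdM
          rw [h, one_mul] at this
          exact hne this
        obtain ⟨q, hq, hqd⟩ := Nat.exists_prime_and_dvd hq1
        have hqM : q ∈ M.primeFactors :=
          Nat.mem_primeFactors.mpr ⟨hq, hqd.trans (Nat.div_dvd_of_dvd hdM), hM0⟩
        have hgd : g0 ^ (k * d) = 1 := by rw [pow_mul]; exact pow_orderOf_eq_one _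
        have hMkd : M ∣ k * d := by
          rw [← hordg0]; exact orderOf_dvd_iff_pow_eq_one.mpr hgd
        have h2 : M / d ∣ k := by
          have h3 : d * (M / d) ∣ d * k := by
            rw [Nat.mul_div_cancel' hdM, mul_comm d k]; exact hMkd
          exact (Nat.mul_dvd_mul_iff_left hdpos).mp h3
        exact hc q hqM (hqd.trans h2)
      apply Subgroup.eq_top_of_card_eq
      rw [Nat.card_zpowers, hdeq, Nat.card_eq_fintype_card, hM]
  by_cases hc : ∀ p ∈ M.primeFactors, ¬ p ∣ k
  · rw [if_pos (hgen.mpr hc),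
      Finset.prod_congr rfl (fun p hp => by rw [hfac p hp, if_neg (hc p hp)]),
      Finset.prod_div_distrib]
    have key := Nat.totient_mul_prod_primeFactors M
    have h2 : ((∏ p ∈ M.primeFactors, (p - 1) : ℕ) : ℂ)
        = ∏ p ∈ M.primeFactors, ((p : ℂ) - 1) := by
      rw [Nat.cast_prod]
      exact Finset.prod_congr rfl fun p hp => by
        rw [Nat.cast_sub (Nat.prime_of_mem_primeFactors hp).one_lt.le, Nat.cast_one]
    have keyC : (Nat.totient M : ℂ) * ∏ p ∈ M.primeFactors, (p : ℂ)
        = (M : ℂ) * ∏ p ∈ M.primeFactors, ((p : ℂ) - 1) := by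
      have h1 := congrArg (Nat.cast : ℕ → ℂ) key
      rw [Nat.cast_mul, Nat.cast_mul, Nat.cast_prod, h2] at h1
      exact h1
    have hMne : (M : ℂ) ≠ 0 := Nat.cast_ne_zero.mpr hM0
    have hprodne : ∏ p ∈ M.primeFactors, ((p : ℂ) - 1) ≠ 0 := by
      apply Finset.prod_ne_zero_iff.mpr
      intro p hp h
      exact (Nat.prime_of_mem_primeFactors hp).ne_one
        (Nat.cast_eq_one.mp (by linear_combination h))
    field_simp
    linear_combination keyC
  · push_neg at hc
    obtain ⟨p, hp, hpk⟩ := hc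
    rw [if_neg (fun h => (hgen.mp h p hp) hpk),
      Finset.prod_eq_zero hp (by rw [hfac p hp, if_pos hpk]), mul_zero]

end Stmt0Aux


open scoped Classical

theorem stmt_0 {G : Type*} [CommGroup G] [Fintype G] [IsCyclic G]
    [Fintype (G →* ℂˣ)] (M : ℕ) (hM : Fintype.card G = M) (g : G) :
    ((Nat.totient M : ℂ) / M) *
      ∏ p ∈ M.primeFactors,
        (1 - (1 / (Nat.totient p : ℂ)) *
          ∑ χ ∈ Finset.univ.filter (fun χ : G →* ℂˣ => orderOf χ = p), ((χ g : ℂˣ) : ℂ)) =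
      (if Subgroup.zpowers g = ⊤ then 1 else 0) :=
  Stmt0Aux.stmt_0' M hM g
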